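/- Consider the configuration-model mean-field system with inertia δ = 0 and suppose α·f_max < β·e_min (out-group hate dominates in-group love in every degree bin). Let c be a real number with 1/2 < c < 1. Then the family defined by θ^B_{f,e}(t) = θ^R_{f,e}(t) = c·e^{−t} for all (f,e) ∈ I is a solution of the system on the interval [0, ln(2c)) with initial value c in every bin, and c·e^{−t} → 1/2 as t → ln(2c) from the left (non-partisan polarization, with every degree bin of each group approaching an equal split between the two choices). -/

import Mathlib

open Set Filter

/-- Friend-weighted fraction with choice-1:
`P_F(t) = (Σ_{(f,e)} f·P_{f,e}·θ_{f,e}(t)) / (Σ_{(f,e)} f·P_{f,e})`,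
where `(f,e)` ranges over the index set `[fmin, fmax] × [emin, emax]`. -/
noncomputable def cfgPF (fmin fmax emin emax : ℕ) (P : ℕ → ℕ → ℝ)
    (θ : ℕ → ℕ → ℝ → ℝ) (t : ℝ) : ℝ :=
  (∑ f ∈ Finset.Icc fmin fmax, ∑ e ∈ Finset.Icc emin emax, (f : ℝ) * P f e * θ f e t) /
    (∑ f ∈ Finset.Icc fmin fmax, ∑ e ∈ Finset.Icc emin emax, (f : ℝ) * P f e)

/-- Enemy-weighted fraction with choice-1:
`P_E(t) = (Σ_{(f,e)} e·P_{f,e}·θ_{f,e}(t)) / (Σ_{(f,e)} e·P_{f,e})`. -/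
noncomputable def cfgPE (fmin fmax emin emax : ℕ) (P : ℕ → ℕ → ℝ)
    (θ : ℕ → ℕ → ℝ → ℝ) (t : ℝ) : ℝ :=
  (∑ f ∈ Finset.Icc fmin fmax, ∑ e ∈ Finset.Icc emin emax, (e : ℝ) * P f e * θ f e t) /
    (∑ f ∈ Finset.Icc fmin fmax, ∑ e ∈ Finset.Icc emin emax, (e : ℝ) * P f e)

/-- `g^B_{f,e}(t) = α·(f/(f+e))·(2P_F^B(t)−1) − β·(e/(f+e))·(2P_E^B(t)−1)`, where
`P_F^B` is the friend-weighted blue fraction and `P_E^B` the enemy-weighted red fraction. -/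
noncomputable def cfgGB (fmin fmax emin emax : ℕ) (PB PR : ℕ → ℕ → ℝ)
    (θB θR : ℕ → ℕ → ℝ → ℝ) (α β : ℝ) (f e : ℕ) (t : ℝ) : ℝ :=
  α * ((f : ℝ) / ((f : ℝ) + (e : ℝ))) * (2 * cfgPF fmin fmax emin emax PB θB t - 1)
    - β * ((e : ℝ) / ((f : ℝ) + (e : ℝ))) * (2 * cfgPE fmin fmax emin emax PR θR t - 1)

/-- `g^R_{f,e}(t) = α·(f/(f+e))·(2P_F^R(t)−1) − β·(e/(f+e))·(2P_E^R(t)−1)`, where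
`P_F^R` is the friend-weighted red fraction and `P_E^R` the enemy-weighted blue fraction. -/
noncomputable def cfgGR (fmin fmax emin emax : ℕ) (PB PR : ℕ → ℕ → ℝ)
    (θB θR : ℕ → ℕ → ℝ → ℝ) (α β : ℝ) (f e : ℕ) (t : ℝ) : ℝ :=
  α * ((f : ℝ) / ((f : ℝ) + (e : ℝ))) * (2 * cfgPF fmin fmax emin emax PR θR t - 1)
    - β * ((e : ℝ) / ((f : ℝ) + (e : ℝ))) * (2 * cfgPE fmin fmax emin emax PB θB t - 1)

/-- Right-hand side of the blue equation in bin `(f,e)`: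
`(1−θ^B_{f,e})·𝟙[g^B_{f,e}(t) > 0] − θ^B_{f,e}·𝟙[g^B_{f,e}(t) < 0]`. -/
noncomputable def cfgRhsB (fmin fmax emin emax : ℕ) (PB PR : ℕ → ℕ → ℝ)
    (θB θR : ℕ → ℕ → ℝ → ℝ) (α β : ℝ) (f e : ℕ) (t : ℝ) : ℝ :=
  (1 - θB f e t) * (if 0 < cfgGB fmin fmax emin emax PB PR θB θR α β f e t then 1 else 0)
    - θB f e t * (if cfgGB fmin fmax emin emax PB PR θB θR α β f e t < 0 then 1 else 0)

/-- Right-hand side of the red equation in bin `(f,e)`: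
`(1−θ^R_{f,e})·𝟙[g^R_{f,e}(t) > 0] − θ^R_{f,e}·𝟙[g^R_{f,e}(t) < 0]`. -/
noncomputable def cfgRhsR (fmin fmax emin emax : ℕ) (PB PR : ℕ → ℕ → ℝ)
    (θB θR : ℕ → ℕ → ℝ → ℝ) (α β : ℝ) (f e : ℕ) (t : ℝ) : ℝ :=
  (1 - θR f e t) * (if 0 < cfgGR fmin fmax emin emax PB PR θB θR α β f e t then 1 else 0)
    - θR f e t * (if cfgGR fmin fmax emin emax PB PR θB θR α β f e t < 0 then 1 else 0)

/-- The family `(θ^B_{f,e}, θ^R_{f,e})_{(f,e) ∈ [fmin,fmax] × [emin,emax]}` is a solution of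
the configuration-model mean-field system (inertia `δ = 0`) on the set `J`. -/
def IsCfgSolutionOn (fmin fmax emin emax : ℕ) (PB PR : ℕ → ℕ → ℝ)
    (θB θR : ℕ → ℕ → ℝ → ℝ) (α β : ℝ) (J : Set ℝ) : Prop :=
  ∀ f ∈ Finset.Icc fmin fmax, ∀ e ∈ Finset.Icc emin emax, ∀ t ∈ J,
    HasDerivWithinAt (θB f e)
      (cfgRhsB fmin fmax emin emax PB PR θB θR α β f e t) J t ∧
    HasDerivWithinAt (θR f e)
      (cfgRhsR fmin fmax emin emax PB PR θB θR α β f e t) J t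

/-! A profile that is the same function `u` in every bin of both groups makes every weighted
fraction equal to `u`, so each bin feels the drive `(α f - β e)/(f + e) · (2u - 1)`. When hate
dominates and `u > 1/2` this is negative everywhere, so every bin obeys `θ' = -θ`; its solution
`c e^{-t}` stays above `1/2` exactly until `t = ln (2c)`. -/

open Real Topology

lemma sum_sum_pos {ι κ : Type*} {s : Finset ι} {t : Finset κ} (hs : s.Nonempty) (ht : t.Nonempty)
    {w : ι → κ → ℝ} (hw : ∀ i ∈ s, ∀ j ∈ t, 0 < w i j) :
    0 < ∑ i ∈ s, ∑ j ∈ t, w i j :=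
  Finset.sum_pos (fun i hi => Finset.sum_pos (hw i hi) ht) hs

section ConstantProfile

variable {fmin fmax emin emax : ℕ} {P PB PR : ℕ → ℕ → ℝ} {α β : ℝ}

lemma cfgPF_const (hf1 : 1 ≤ fmin) (hf2 : fmin ≤ fmax) (he2 : emin ≤ emax)
    (hP : ∀ f ∈ Finset.Icc fmin fmax, ∀ e ∈ Finset.Icc emin emax, 0 < P f e) (u : ℝ → ℝ) (t : ℝ) :
    cfgPF fmin fmax emin emax P (fun _ _ => u) t = u t := by
  have hpos : 0 < ∑ f ∈ Finset.Icc fmin fmax, ∑ e ∈ Finset.Icc emin emax, (f : ℝ) * P f e :=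
    sum_sum_pos (Finset.nonempty_Icc.2 hf2) (Finset.nonempty_Icc.2 he2) fun f hf e he =>
      mul_pos (Nat.cast_pos.2 (hf1.trans (Finset.mem_Icc.1 hf).1)) (hP f hf e he)
  simp only [cfgPF, ← Finset.sum_mul]
  exact mul_div_cancel_left₀ _ hpos.ne'

lemma cfgPE_const (hf2 : fmin ≤ fmax) (he1 : 1 ≤ emin) (he2 : emin ≤ emax)
    (hP : ∀ f ∈ Finset.Icc fmin fmax, ∀ e ∈ Finset.Icc emin emax, 0 < P f e) (u : ℝ → ℝ) (t : ℝ) :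
    cfgPE fmin fmax emin emax P (fun _ _ => u) t = u t := by
  have hpos : 0 < ∑ f ∈ Finset.Icc fmin fmax, ∑ e ∈ Finset.Icc emin emax, (e : ℝ) * P f e :=
    sum_sum_pos (Finset.nonempty_Icc.2 hf2) (Finset.nonempty_Icc.2 he2) fun f hf e he =>
      mul_pos (Nat.cast_pos.2 (he1.trans (Finset.mem_Icc.1 he).1)) (hP f hf e he)
  simp only [cfgPE, ← Finset.sum_mul]
  exact mul_div_cancel_left₀ _ hpos.ne'

lemma cfgGB_const (hf1 : 1 ≤ fmin) (hf2 : fmin ≤ fmax) (he1 : 1 ≤ emin) (he2 : emin ≤ emax)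
    (hPB : ∀ f ∈ Finset.Icc fmin fmax, ∀ e ∈ Finset.Icc emin emax, 0 < PB f e)
    (hPR : ∀ f ∈ Finset.Icc fmin fmax, ∀ e ∈ Finset.Icc emin emax, 0 < PR f e)
    (u : ℝ → ℝ) (f e : ℕ) (t : ℝ) :
    cfgGB fmin fmax emin emax PB PR (fun _ _ => u) (fun _ _ => u) α β f e t
      = (α * f - β * e) / (f + e) * (2 * u t - 1) := by
  rw [cfgGB, cfgPF_const hf1 hf2 he2 hPB, cfgPE_const hf2 he1 he2 hPR]
  ring

lemma cfgGR_const (hf1 : 1 ≤ fmin) (hf2 : fmin ≤ fmax) (he1 : 1 ≤ emin) (he2 : emin ≤ emax)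
    (hPB : ∀ f ∈ Finset.Icc fmin fmax, ∀ e ∈ Finset.Icc emin emax, 0 < PB f e)
    (hPR : ∀ f ∈ Finset.Icc fmin fmax, ∀ e ∈ Finset.Icc emin emax, 0 < PR f e)
    (u : ℝ → ℝ) (f e : ℕ) (t : ℝ) :
    cfgGR fmin fmax emin emax PB PR (fun _ _ => u) (fun _ _ => u) α β f e t
      = (α * f - β * e) / (f + e) * (2 * u t - 1) := by
  rw [cfgGR, cfgPF_const hf1 hf2 he2 hPR, cfgPE_const hf2 he1 he2 hPB]
  ring

lemma cfgRhsB_of_cfgGB_neg {θB θR : ℕ → ℕ → ℝ → ℝ} {f e : ℕ} {t : ℝ}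
    (h : cfgGB fmin fmax emin emax PB PR θB θR α β f e t < 0) :
    cfgRhsB fmin fmax emin emax PB PR θB θR α β f e t = -θB f e t := by
  rw [cfgRhsB, if_neg (lt_asymm h), if_pos h]
  ring

lemma cfgRhsR_of_cfgGR_neg {θB θR : ℕ → ℕ → ℝ → ℝ} {f e : ℕ} {t : ℝ}
    (h : cfgGR fmin fmax emin emax PB PR θB θR α β f e t < 0) :
    cfgRhsR fmin fmax emin emax PB PR θB θR α β f e t = -θR f e t := by
  rw [cfgRhsR, if_neg (lt_asymm h), if_pos h]
  ring

theorem isCfgSolutionOn_const_of_decay (hf1 : 1 ≤ fmin) (hf2 : fmin ≤ fmax) (he1 : 1 ≤ emin)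
    (he2 : emin ≤ emax) (hPB : ∀ f ∈ Finset.Icc fmin fmax, ∀ e ∈ Finset.Icc emin emax, 0 < PB f e)
    (hPR : ∀ f ∈ Finset.Icc fmin fmax, ∀ e ∈ Finset.Icc emin emax, 0 < PR f e)
    (hα : 0 ≤ α) (hβ : 0 ≤ β) (hdom : α * fmax < β * emin) {u : ℝ → ℝ} {J : Set ℝ}
    (hu : ∀ t ∈ J, HasDerivWithinAt u (-u t) J t) (hhalf : ∀ t ∈ J, 1 / 2 < u t) :
    IsCfgSolutionOn fmin fmax emin emax PB PR (fun _ _ => u) (fun _ _ => u) α β J := by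
  intro f hf e he t ht
  obtain ⟨-, hfmax⟩ := Finset.mem_Icc.1 hf
  obtain ⟨hemin, -⟩ := Finset.mem_Icc.1 he
  have hbin : α * f < β * e :=
    calc α * f ≤ α * fmax := by gcongr
      _ < β * emin := hdom
      _ ≤ β * e := by gcongr
  have hdrive : (α * f - β * e) / (f + e) * (2 * u t - 1) < 0 :=
    mul_neg_of_neg_of_pos
      (div_neg_of_neg_of_pos (by linarith)
        (add_pos_of_nonneg_of_pos (Nat.cast_nonneg f) (Nat.cast_pos.2 (he1.trans hemin))))
      (by linarith [hhalf t ht])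
  rw [cfgRhsB_of_cfgGB_neg (by rwa [cfgGB_const hf1 hf2 he1 he2 hPB hPR]),
    cfgRhsR_of_cfgGR_neg (by rwa [cfgGR_const hf1 hf2 he1 he2 hPB hPR])]
  exact ⟨hu t ht, hu t ht⟩

end ConstantProfile

section ExponentialDecay

variable {c : ℝ}

lemma mul_exp_neg_eq_exp_log_sub (hc : 0 < c) (t : ℝ) :
    c * exp (-t) = exp (log (2 * c) - t) / 2 := by
  rw [exp_sub, exp_log (by positivity), exp_neg]
  field_simp

lemma half_lt_mul_exp_neg (hc : 0 < c) {t : ℝ} (ht : t < log (2 * c)) :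
    1 / 2 < c * exp (-t) := by
  rw [mul_exp_neg_eq_exp_log_sub hc]
  have : 1 < exp (log (2 * c) - t) := one_lt_exp_iff.2 (by linarith)
  linarith

lemma hasDerivAt_mul_exp_neg (c t : ℝ) :
    HasDerivAt (fun t => c * exp (-t)) (-(c * exp (-t))) t :=
  ((hasDerivAt_neg t).exp.const_mul c).congr_deriv (by ring)

lemma tendsto_mul_exp_neg_log_two_mul (hc : 0 < c) :
    Tendsto (fun t => c * exp (-t)) (𝓝 (log (2 * c))) (𝓝 (1 / 2)) := by
  simp_rw [mul_exp_neg_eq_exp_log_sub hc]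
  have hcont : Continuous fun t => exp (log (2 * c) - t) / 2 := by fun_prop
  simpa using hcont.tendsto (log (2 * c))

end ExponentialDecay

theorem cfg_nonpartisan_trajectory_general
    (fmin fmax emin emax : ℕ)
    (hf1 : 1 ≤ fmin) (hf2 : fmin ≤ fmax) (he1 : 1 ≤ emin) (he2 : emin ≤ emax)
    (PB PR : ℕ → ℕ → ℝ)
    (hPB : ∀ f ∈ Finset.Icc fmin fmax, ∀ e ∈ Finset.Icc emin emax, 0 < PB f e)
    (hPR : ∀ f ∈ Finset.Icc fmin fmax, ∀ e ∈ Finset.Icc emin emax, 0 < PR f e)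
    (α β : ℝ) (hα : α ∈ Set.Icc (0:ℝ) 1) (hβ : β ∈ Set.Icc (0:ℝ) 1)
    (hdom : α * (fmax : ℝ) < β * (emin : ℝ))
    (c : ℝ) (hc1 : 1 / 2 < c) :
    IsCfgSolutionOn fmin fmax emin emax PB PR
      (fun _ _ t => c * Real.exp (-t)) (fun _ _ t => c * Real.exp (-t)) α β
      (Set.Ico 0 (Real.log (2 * c))) ∧
    c * Real.exp (-(0:ℝ)) = c ∧
    Filter.Tendsto (fun t => c * Real.exp (-t))
      (nhdsWithin (Real.log (2 * c)) (Set.Iio (Real.log (2 * c))))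
      (nhds (1 / 2 : ℝ)) := by
  have hc : 0 < c := by linarith
  refine ⟨isCfgSolutionOn_const_of_decay hf1 hf2 he1 he2 hPB hPR hα.1 hβ.1 hdom
    (fun t _ => (hasDerivAt_mul_exp_neg c t).hasDerivWithinAt)
    (fun t ht => half_lt_mul_exp_neg hc ht.2), by simp, ?_⟩
  exact (tendsto_mul_exp_neg_log_two_mul hc).mono_left nhdsWithin_le_nhds

/-- In the configuration-model mean-field system with `δ = 0`, if
`α·f_max < β·e_min` (out-group hate dominates in every bin) and `1/2 < c < 1`, then the
family `θ^B_{f,e}(t) = θ^R_{f,e}(t) = c·e^{−t}` is a solution on `[0, ln(2c))` with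
initial value `c` in every bin, and `c·e^{−t} → 1/2` as `t → ln(2c)⁻`
(non-partisan polarization). -/
theorem cfg_nonpartisan_trajectory
    (fmin fmax emin emax : ℕ)
    (hf1 : 1 ≤ fmin) (hf2 : fmin ≤ fmax) (he1 : 1 ≤ emin) (he2 : emin ≤ emax)
    (PB PR : ℕ → ℕ → ℝ)
    (hPB : ∀ f ∈ Finset.Icc fmin fmax, ∀ e ∈ Finset.Icc emin emax, 0 < PB f e)
    (hPR : ∀ f ∈ Finset.Icc fmin fmax, ∀ e ∈ Finset.Icc emin emax, 0 < PR f e)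
    (α β : ℝ) (hα : α ∈ Set.Icc (0:ℝ) 1) (hβ : β ∈ Set.Icc (0:ℝ) 1)
    (hdom : α * (fmax : ℝ) < β * (emin : ℝ))
    (c : ℝ) (hc1 : 1 / 2 < c) (hc2 : c < 1) :
    IsCfgSolutionOn fmin fmax emin emax PB PR
      (fun _ _ t => c * Real.exp (-t)) (fun _ _ t => c * Real.exp (-t)) α β
      (Set.Ico 0 (Real.log (2 * c))) ∧
    c * Real.exp (-(0:ℝ)) = c ∧
    Filter.Tendsto (fun t => c * Real.exp (-t))
      (nhdsWithin (Real.log (2 * c)) (Set.Iio (Real.log (2 * c))))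
      (nhds (1 / 2 : ℝ)) :=
  cfg_nonpartisan_trajectory_general fmin fmax emin emax hf1 hf2 he1 he2 PB PR hPB hPR α β hα hβ
    hdom c hc1
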